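/- arXiv:2005.05792 — 2 statements merged into one kernel-verified Lean document; each statement's English description precedes it below -/
import Mathlib

section
/- An oriented hypergraph G^σ is incidence balanced if and only if for any two elements a, b of V(G) ∪ E(G), all paths in G^σ from a to b have the same incidence sign. -/
/-!
Incidence balance says exactly that the incidence signs form a coboundary: there is a labelling
`f : V ⊕ E → {±1}` with `σ(e, v) = f v * f e` (`f v` records the part containing `v`, `f e`
which part is positive in `e`). The sign of any walk from `a` to `b` then telescopes to
`f a * f b`. Conversely, if path signs depend only on the endpoints, fix a root in each component
of the incidence graph and let `f x` be the sign of a path from the root to `x`. Extending such a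
path by an edge `xy` either gives a path to `y`, or `y` already lies on it and cutting the path
at `y` removes a tail whose sign is that of the edge; either way `f y = f x * σ(x, y)`.
-/

open Matrix BigOperators

variable {V E : Type*}

/-- `M` is the signed edge-vertex incidence matrix of an incidence orientation of the
hypergraph whose incidence relation is `mem` (`mem e v` means `v ∈ e`). -/
def IsOrientation (mem : E → V → Prop) (M : Matrix E V ℝ) : Prop :=
  ∀ e v, (mem e v → M e v = 1 ∨ M e v = -1) ∧ (¬ mem e v → M e v = 0)

/-- The incidence matrix of the all-positive orientation `G⁺`. -/
def Mplus (mem : E → V → Prop) [∀ e v, Decidable (mem e v)] : Matrix E V ℝ :=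
  Matrix.of fun e v => if mem e v then 1 else 0

/-- Vertex switching at `w`: negate all incidence signs at the vertex `w`. -/
def vertexSwitch [DecidableEq V] (M : Matrix E V ℝ) (w : V) : Matrix E V ℝ :=
  Matrix.of fun e v => if v = w then -M e v else M e v

/-- Edge switching at `f`: negate all incidence signs of the edge `f`. -/
def edgeSwitch [DecidableEq E] (M : Matrix E V ℝ) (f : E) : Matrix E V ℝ :=
  Matrix.of fun e v => if e = f then -M e v else M e v

/-- One switching step: a single vertex switching or a single edge switching. -/
def SwitchStep [DecidableEq V] [DecidableEq E] (M N : Matrix E V ℝ) : Prop :=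
  (∃ w, N = vertexSwitch M w) ∨ (∃ f, N = edgeSwitch M f)

/-- Switching equivalence: a finite sequence of vertex and/or edge switchings. -/
def SwitchEquiv [DecidableEq V] [DecidableEq E] : Matrix E V ℝ → Matrix E V ℝ → Prop :=
  Relation.ReflTransGen SwitchStep

/-- Incidence balance: there is a bipartition `{X, Xᶜ}` of the vertices such that every edge
intersects one part exactly in its positively incident vertices and the other part exactly in
its negatively incident vertices (the roles of the parts may vary edge by edge). -/
def IncBalanced (mem : E → V → Prop) (M : Matrix E V ℝ) : Prop :=
  ∃ X : V → Prop, ∀ e,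
    (∀ v, mem e v → (M e v = 1 ↔ X v)) ∨ (∀ v, mem e v → (M e v = 1 ↔ ¬ X v))

/-- The adjacency matrix of an oriented hypergraph:
`a u v = ∑_{e ∋ u,v} σ(e,u)σ(e,v)` for `u ≠ v` and `0` on the diagonal. -/
def adjMat [Fintype E] [DecidableEq V] (M : Matrix E V ℝ) : Matrix V V ℝ :=
  Matrix.of fun u v => if u = v then 0 else ∑ e, M e u * M e v

/-- The diagonal matrix of vertex degrees. -/
def degMat [Fintype E] [DecidableEq V] (mem : E → V → Prop) [∀ e v, Decidable (mem e v)] :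
    Matrix V V ℝ :=
  Matrix.diagonal fun v => ((Finset.univ.filter fun e => mem e v).card : ℝ)

/-- `μ` is a (real) eigenvalue of the real matrix `A`. -/
def IsEigenvalue {n : Type*} [Fintype n] (A : Matrix n n ℝ) (μ : ℝ) : Prop :=
  ∃ x : n → ℝ, x ≠ 0 ∧ A.mulVec x = μ • x

/-- `μ` is a complex eigenvalue of the real matrix `A`. -/
def IsEigenvalueC {n : Type*} [Fintype n] (A : Matrix n n ℝ) (μ : ℂ) : Prop :=
  ∃ x : n → ℂ, x ≠ 0 ∧ (A.map fun a => (a : ℂ)).mulVec x = μ • x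

/-- Spectral radius: the maximum modulus of the (complex) eigenvalues of `A`. -/
noncomputable def specRad {n : Type*} [Fintype n] (A : Matrix n n ℝ) : ℝ :=
  sSup {r | ∃ μ : ℂ, IsEigenvalueC A μ ∧ r = ‖μ‖}

/-- `s` is a singular value of `M`, i.e. a square root of an eigenvalue of `Mᵀ M`. -/
def IsSingularValue [Fintype V] [Fintype E] (M : Matrix E V ℝ) (s : ℝ) : Prop :=
  0 ≤ s ∧ IsEigenvalue (Mᵀ * M) (s ^ 2)

/-- The maximum singular value of `M`. -/
noncomputable def maxSingularValue [Fintype V] [Fintype E] (M : Matrix E V ℝ) : ℝ :=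
  sSup {s | IsSingularValue M s}

/-- The (bipartite) incidence graph of a hypergraph, on vertex set `V ⊕ E`, with an edge
joining `v` and `e` for each incidence `(e, v)`. -/
def incGraph (mem : E → V → Prop) : SimpleGraph (V ⊕ E) where
  Adj x y := (∃ v e, x = Sum.inl v ∧ y = Sum.inr e ∧ mem e v) ∨
             (∃ v e, x = Sum.inr e ∧ y = Sum.inl v ∧ mem e v)
  symm := by
    refine ⟨?_⟩
    rintro x y (⟨v, e, h1, h2, h3⟩ | ⟨v, e, h1, h2, h3⟩)
    · exact Or.inr ⟨v, e, h2, h1, h3⟩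
    · exact Or.inl ⟨v, e, h2, h1, h3⟩
  loopless := by
    refine ⟨?_⟩
    rintro x (⟨v, e, h1, h2, h3⟩ | ⟨v, e, h1, h2, h3⟩) <;> subst h1 <;> simp at h2

/-- A hypergraph is connected if any two elements of `V ∪ E` are joined by a walk,
i.e. its incidence graph is connected. -/
def HConnected (mem : E → V → Prop) : Prop := (incGraph mem).Connected

/-- The sign of an incidence, viewed as an edge of the incidence graph. -/
def pairSign (M : Matrix E V ℝ) : V ⊕ E → V ⊕ E → ℝ
  | Sum.inl v, Sum.inr e => M e v
  | Sum.inr e, Sum.inl v => M e v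
  | _, _ => 1

/-- The incidence sign of a walk (in particular of a path or a cycle) of the oriented
hypergraph, realized as a walk of the incidence graph: the product of the signs of the
incidences traversed. -/
def walkSign {mem : E → V → Prop} (M : Matrix E V ℝ) {x y : V ⊕ E}
    (w : (incGraph mem).Walk x y) : ℝ :=
  (w.darts.map fun d => pairSign M d.toProd.1 d.toProd.2).prod

namespace SimpleGraph.Walk

variable {α R : Type*} [CommMonoid R] {G : SimpleGraph α} (s : α → α → R)

def dartProd {a b : α} (w : G.Walk a b) : R :=
  (w.darts.map fun d => s d.fst d.snd).prod

@[simp]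
lemma dartProd_nil {a : α} : (nil : G.Walk a a).dartProd s = 1 := rfl

@[simp]
lemma dartProd_cons {a b c : α} (h : G.Adj a b) (w : G.Walk b c) :
    (cons h w).dartProd s = s a b * w.dartProd s := by
  simp [dartProd]

lemma dartProd_append {a b c : α} (p : G.Walk a b) (q : G.Walk b c) :
    (p.append q).dartProd s = p.dartProd s * q.dartProd s := by
  simp [dartProd, darts_append]

lemma dartProd_concat {a b c : α} (p : G.Walk a b) (h : G.Adj b c) :
    (p.concat h).dartProd s = p.dartProd s * s b c := by
  simp [dartProd, darts_concat]

@[simp]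
lemma dartProd_copy {a b a' b' : α} (w : G.Walk a b) (ha : a = a') (hb : b = b') :
    (w.copy ha hb).dartProd s = w.dartProd s := by
  subst ha hb; rfl

variable {s}

lemma dartProd_mul_self (hs : ∀ x y, G.Adj x y → s x y * s x y = 1) {a b : α}
    (w : G.Walk a b) : w.dartProd s * w.dartProd s = 1 := by
  induction w with
  | nil => simp
  | cons h w ih =>
    rw [dartProd_cons, mul_mul_mul_comm, hs _ _ h, ih, one_mul]

lemma dartProd_eq_of_coboundary {f : α → R} (hf : ∀ x, f x * f x = 1)
    (hs : ∀ x y, G.Adj x y → s x y = f x * f y) {a b : α} (w : G.Walk a b) :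
    w.dartProd s = f a * f b := by
  induction w with
  | nil => simp [hf]
  | @cons a b c h w ih =>
    rw [dartProd_cons, ih, hs _ _ h, mul_assoc, ← mul_assoc (f b), hf, one_mul]

lemma exists_isPath_dartProd_eq_mul [DecidableEq α]
    (hsymm : ∀ x y, G.Adj x y → s y x = s x y)
    (hsq : ∀ x y, G.Adj x y → s x y * s x y = 1)
    (H : ∀ (a b : α) (p q : G.Walk a b), p.IsPath → q.IsPath → p.dartProd s = q.dartProd s)
    {r x y : α} {p : G.Walk r x} (hp : p.IsPath) (h : G.Adj x y) :
    ∃ q : G.Walk r y, q.IsPath ∧ q.dartProd s = p.dartProd s * s x y := by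
  by_cases hy : y ∈ p.support
  · refine ⟨p.takeUntil y hy, hp.takeUntil hy, ?_⟩
    have hdrop : (p.dropUntil y hy).dartProd s = s x y := by
      have hedge : (cons h.symm nil : G.Walk y x).IsPath := by simp [h.ne']
      rw [H _ _ _ _ (hp.dropUntil hy) hedge, dartProd_cons, dartProd_nil, mul_one, hsymm _ _ h]
    conv_rhs => rw [← p.take_spec hy, dartProd_append, hdrop, mul_assoc, hsq _ _ h, mul_one]
  · exact ⟨p.concat h, hp.concat hy h, dartProd_concat s p h⟩

lemma exists_coboundary_of_isPath_dartProd_eq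
    (hsymm : ∀ x y, G.Adj x y → s y x = s x y)
    (hsq : ∀ x y, G.Adj x y → s x y * s x y = 1)
    (H : ∀ (a b : α) (p q : G.Walk a b), p.IsPath → q.IsPath → p.dartProd s = q.dartProd s) :
    ∃ f : α → R, (∀ x, f x * f x = 1) ∧ ∀ x y, G.Adj x y → s x y = f x * f y := by
  classical
  let rep x := (G.connectedComponentMk x).out
  have hpath (x : α) : ∃ p : G.Walk (rep x) x, p.IsPath :=
    (ConnectedComponent.exact (Quot.out_eq _)).exists_isPath
  choose P hP using hpath
  have hf (x : α) : (P x).dartProd s * (P x).dartProd s = 1 := dartProd_mul_self hsq _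
  refine ⟨fun x => (P x).dartProd s, hf, fun x y h => ?_⟩
  obtain ⟨q, hq, hqs⟩ := exists_isPath_dartProd_eq_mul hsymm hsq H (hP x) h
  have hrep : rep x = rep y := by simp only [rep, ConnectedComponent.sound h.reachable]
  have hy : (P y).dartProd s = (P x).dartProd s * s x y := by
    rw [← hqs, ← dartProd_copy s q hrep rfl]
    exact H _ _ _ _ (hP y) ((isPath_copy q hrep rfl).2 hq)
  change s x y = (P x).dartProd s * (P y).dartProd s
  rw [hy, ← mul_assoc, hf, one_mul]

theorem forall_isPath_dartProd_eq_iff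
    (hsymm : ∀ x y, G.Adj x y → s y x = s x y)
    (hsq : ∀ x y, G.Adj x y → s x y * s x y = 1) :
    (∀ (a b : α) (p q : G.Walk a b), p.IsPath → q.IsPath → p.dartProd s = q.dartProd s) ↔
      ∃ f : α → R, (∀ x, f x * f x = 1) ∧ ∀ x y, G.Adj x y → s x y = f x * f y :=
  ⟨exists_coboundary_of_isPath_dartProd_eq hsymm hsq, fun ⟨_, hf, hs⟩ _ _ p q _ _ => by
    rw [dartProd_eq_of_coboundary hf hs p, dartProd_eq_of_coboundary hf hs q]⟩

end SimpleGraph.Walk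

section IncidenceGraph

variable {mem : E → V → Prop} {M : Matrix E V ℝ}

lemma walkSign_eq_dartProd {x y : V ⊕ E} (w : (incGraph mem).Walk x y) :
    walkSign M w = w.dartProd (pairSign M) := rfl

lemma pairSign_symm (M : Matrix E V ℝ) (x y : V ⊕ E) : pairSign M y x = pairSign M x y := by
  cases x <;> cases y <;> rfl

lemma IsOrientation.pairSign_mul_self (hM : IsOrientation mem M) {x y : V ⊕ E}
    (h : (incGraph mem).Adj x y) : pairSign M x y * pairSign M x y = 1 := by
  rcases h with ⟨v, e, rfl, rfl, hv⟩ | ⟨v, e, rfl, rfl, hv⟩ <;>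
    exact mul_self_eq_one_iff.2 ((hM e v).1 hv)

lemma forall_incGraph_adj_pairSign_eq_iff (f : V ⊕ E → ℝ) :
    (∀ x y, (incGraph mem).Adj x y → pairSign M x y = f x * f y) ↔
      ∀ e v, mem e v → M e v = f (Sum.inl v) * f (Sum.inr e) := by
  refine ⟨fun h e v hv => h _ _ (Or.inl ⟨v, e, rfl, rfl, hv⟩), ?_⟩
  rintro h x y (⟨v, e, rfl, rfl, hv⟩ | ⟨v, e, rfl, rfl, hv⟩)
  · exact h e v hv
  · exact (h e v hv).trans (mul_comm _ _)

lemma IncBalanced.exists_sign (hM : IsOrientation mem M) (hB : IncBalanced mem M) :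
    ∃ f : V ⊕ E → ℝ, (∀ x, f x * f x = 1) ∧
      ∀ e v, mem e v → M e v = f (Sum.inl v) * f (Sum.inr e) := by
  classical
  obtain ⟨X, hX⟩ := hB
  refine ⟨Sum.elim (fun v => if X v then 1 else -1)
    (fun e => if ∀ v, mem e v → (M e v = 1 ↔ X v) then 1 else -1), ?_, fun e v hv => ?_⟩
  · rintro (v | e) <;> dsimp only [Sum.elim_inl, Sum.elim_inr] <;> split_ifs <;> norm_num
  · dsimp only [Sum.elim_inl, Sum.elim_inr]
    rcases (hM e v).1 hv with h | h <;> split_ifs with hXv hP hP <;> grind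

lemma incBalanced_of_sign (f : V ⊕ E → ℝ) (hf : ∀ x, f x * f x = 1)
    (hs : ∀ e v, mem e v → M e v = f (Sum.inl v) * f (Sum.inr e)) : IncBalanced mem M := by
  refine ⟨fun v => f (Sum.inl v) = 1, fun e => ?_⟩
  rcases mul_self_eq_one_iff.1 (hf (Sum.inr e)) with he | he
  · exact Or.inl fun v hv => by rw [hs e v hv, he, mul_one]
  · refine Or.inr fun v hv => ?_
    rcases mul_self_eq_one_iff.1 (hf (Sum.inl v)) with hv' | hv' <;>
      norm_num [hs e v hv, he, hv']

lemma incBalanced_iff_exists_sign (hM : IsOrientation mem M) :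
    IncBalanced mem M ↔ ∃ f : V ⊕ E → ℝ, (∀ x, f x * f x = 1) ∧
      ∀ e v, mem e v → M e v = f (Sum.inl v) * f (Sum.inr e) :=
  ⟨IncBalanced.exists_sign hM, fun ⟨f, hf, hs⟩ => incBalanced_of_sign f hf hs⟩

end IncidenceGraph

/-- `G^σ` is incidence balanced iff for any two elements `a, b` of `V ∪ E`,
all paths from `a` to `b` have the same incidence sign. -/
theorem incBalanced_iff_paths_same_sign
    (mem : E → V → Prop) (M : Matrix E V ℝ) (hM : IsOrientation mem M) :
    IncBalanced mem M ↔
      ∀ (a b : V ⊕ E) (p q : (incGraph mem).Walk a b),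
        p.IsPath → q.IsPath → walkSign M p = walkSign M q := by
  simp only [walkSign_eq_dartProd]
  rw [SimpleGraph.Walk.forall_isPath_dartProd_eq_iff (fun x y _ => pairSign_symm M x y)
    fun _ _ => hM.pairSign_mul_self]
  simp only [forall_incGraph_adj_pairSign_eq_iff]
  exact incBalanced_iff_exists_sign hM
end

section
/- Let G^σ be a connected k-uniform oriented hypergraph with k even and ΓG^σ its induced signed hypergraph. Then 0 is an H-eigenvalue of the Laplacian tensor L(ΓG^σ) if and only if there is a bipartition {V^+, V^-} of V(G) such that each positive edge intersects V^- in an odd number of vertices and each negative edge intersects V^- in an even number of vertices. -/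
open BigOperators

variable {V : Type*}

/-- The adjacency tensor of a signed `k`-uniform hypergraph with edge set `E` and edge signs
`γ`: the entry at a tuple whose underlying vertex set is an edge `e` is `γ(e)/(k-1)!`,
and all other entries are `0`. -/
noncomputable def adjT (R : Type*) [Field R] [Fintype V] [DecidableEq V] (k : ℕ)
    (E : Finset (Finset V)) (γ : Finset V → R) : (Fin k → V) → R :=
  fun i => if Finset.image i Finset.univ ∈ E
    then γ (Finset.image i Finset.univ) / (Nat.factorial (k - 1) : R) else 0

/-- `(lam, x)` is an eigenpair of the order-`k` tensor `A`:
`x ≠ 0` and `(A x^{k-1})_v = lam * x_v^{k-1}` for every `v`. -/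
def IsTensorEigenpair (R : Type*) [CommRing R] [Fintype V] [DecidableEq V] (k : ℕ) [NeZero k]
    (A : (Fin k → V) → R) (lam : R) (x : V → R) : Prop :=
  x ≠ 0 ∧ ∀ v : V,
    (∑ i : Fin k → V, if i 0 = v
      then A i * ∏ j ∈ Finset.univ.filter (fun j : Fin k => j ≠ 0), x (i j) else 0)
    = lam * x v ^ (k - 1)

/-- The spectral radius of a real order-`k` tensor: the supremum of the moduli of its
(complex) eigenvalues. -/
noncomputable def tSpecRad [Fintype V] [DecidableEq V] (k : ℕ) [NeZero k]
    (A : (Fin k → V) → ℝ) : ℝ :=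
  sSup {r | ∃ lam : ℂ,
    (∃ x : V → ℂ, IsTensorEigenpair ℂ k (fun i => ((A i : ℝ) : ℂ)) lam x) ∧
      r = ‖lam‖}

/-- One vertex switching on a signed hypergraph: negate the sign of every edge containing `w`. -/
def VSwitchStep [DecidableEq V] (γ δ : Finset V → ℝ) : Prop :=
  ∃ w : V, ∀ e, δ e = if w ∈ e then -γ e else γ e

/-- Two signed hypergraphs (with common edge set `E`) are switching equivalent if one is
obtained from the other by a finite sequence of vertex switchings (signs off `E` are
irrelevant). -/
def SignedSwitchEquiv [DecidableEq V] (E : Finset (Finset V)) (γ γ' : Finset V → ℝ) : Prop :=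
  ∃ δ, Relation.ReflTransGen VSwitchStep γ δ ∧ ∀ e ∈ E, δ e = γ' e

/-- The action `S T S` of a signature matrix (diagonal ±1 matrix) `S` on an order-`k` tensor:
`(S T S)_{i_1…i_k} = S_{i_1 i_1} t_{i_1…i_k} S_{i_2 i_2} ⋯ S_{i_k i_k}`. -/
def conjT (R : Type*) [CommRing R] [DecidableEq V] (k : ℕ) [NeZero k] [Fintype V]
    (S : V → R) (A : (Fin k → V) → R) : (Fin k → V) → R :=
  fun i => S (i 0) * A i * ∏ j ∈ Finset.univ.filter (fun j : Fin k => j ≠ 0), S (i j)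

/-- The diagonal degree tensor `D(G)` of the hypergraph with edge set `E`:
`d_{v…v} = deg v`, all other entries `0`. -/
noncomputable def degT [Fintype V] [DecidableEq V] (k : ℕ) [NeZero k]
    (E : Finset (Finset V)) : (Fin k → V) → ℝ :=
  fun i => if ∀ j, i j = i 0 then ((E.filter fun e => i 0 ∈ e).card : ℝ) else 0

/-- The Laplacian tensor `L(Γ) = D(G) + A(Γ)` of a signed `k`-uniform hypergraph. -/
noncomputable def lapT [Fintype V] [DecidableEq V] (k : ℕ) [NeZero k]
    (E : Finset (Finset V)) (γ : Finset V → ℝ) : (Fin k → V) → ℝ :=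
  fun i => degT k E i + adjT ℝ k E γ i

/-- `σ` is an incidence orientation of the hypergraph with edge set `E`: each incidence
`(e, v)` with `v ∈ e ∈ E` is labeled `+1` or `-1`. -/
def IsIncidenceOrientation (E : Finset (Finset V)) (σ : Finset V → V → ℝ) : Prop :=
  ∀ e ∈ E, ∀ v ∈ e, σ e v = 1 ∨ σ e v = -1

/-- The edge signs of the signed hypergraph `ΓG^σ` induced by an orientation `σ`:
`sgn_σ(e) = (-1)^{|e|-1} ∏_{v ∈ e} σ(e,v)` (for `k`-uniform edges, `|e| = k`). -/
def inducedSign [DecidableEq V] (k : ℕ) (σ : Finset V → V → ℝ) : Finset V → ℝ :=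
  fun e => (-1 : ℝ) ^ (k - 1) * ∏ v ∈ e, σ e v

/-- The incidence graph of the hypergraph with edge set `E`. -/
def hIncGraph [DecidableEq V] (E : Finset (Finset V)) : SimpleGraph (V ⊕ {e // e ∈ E}) where
  Adj x y := (∃ v e, x = Sum.inl v ∧ y = Sum.inr e ∧ v ∈ e.1) ∨
             (∃ v e, x = Sum.inr e ∧ y = Sum.inl v ∧ v ∈ e.1)
  symm := by
    constructor
    rintro x y (⟨v, e, h1, h2, h3⟩ | ⟨v, e, h1, h2, h3⟩)
    · exact Or.inr ⟨v, e, h2, h1, h3⟩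
    · exact Or.inl ⟨v, e, h2, h1, h3⟩
  loopless := by
    constructor
    rintro x (⟨v, e, h1, h2, h3⟩ | ⟨v, e, h1, h2, h3⟩) <;> subst h1 <;> simp at h2

/-- A hypergraph is connected if any two elements of `V ∪ E` are joined by a walk. -/
def HConnectedF [DecidableEq V] (E : Finset (Finset V)) : Prop := (hIncGraph E).Connected

/-!
Unfolding the tensor (an edge `e ∋ v` is the image of exactly `(k-1)!` tuples starting at `v`),
`L x^{k-1} = 0` says that at every vertex `v`
`deg v · x_v^{k-1} + ∑_{e ∋ v} sgn(e) ∏_{u ∈ e ∖ v} x_u = 0`.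
At a vertex where `|x|` is maximal, multiplying by `x_v` turns this into a vanishing sum of the
nonnegative terms `|x_v|^k + sgn(e) ∏_{u ∈ e} x_u` (`k` is even), so every term vanishes; this
forces `|x|` to be maximal on the whole edge and hence, by connectivity, constant. Then
`sgn(e) ∏_{u ∈ e} x_u = -|x|^k` on every edge, which is the parity condition for `V⁻ = {x < 0}`.
Conversely, since `k - 1` is odd, the `±1` vector of such a bipartition solves the equations.
-/

open Finset
open scoped Nat

section TensorAction

variable [Fintype V] [DecidableEq V] {R : Type*} [CommRing R]

/-- The vector `A x^{k-1}` of the eigenvalue equation. -/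
def tensorApply (k : ℕ) [NeZero k] (A : (Fin k → V) → R) (x : V → R) (v : V) : R :=
  ∑ i : Fin k → V,
    if i 0 = v then A i * ∏ j ∈ univ.filter (fun j : Fin k => j ≠ 0), x (i j) else 0

theorem isTensorEigenpair_iff (k : ℕ) [NeZero k] (A : (Fin k → V) → R) (lam : R) (x : V → R) :
    IsTensorEigenpair R k A lam x ↔ x ≠ 0 ∧ ∀ v, tensorApply k A x v = lam * x v ^ (k - 1) :=
  Iff.rfl

theorem tensorApply_add (k : ℕ) [NeZero k] (A B : (Fin k → V) → R) (x : V → R) (v : V) :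
    tensorApply k (A + B) x v = tensorApply k A x v + tensorApply k B x v := by
  simp only [tensorApply, ← sum_add_distrib]
  refine sum_congr rfl fun i _ => ?_
  split_ifs <;> simp [add_mul]

theorem tensorApply_succ (n : ℕ) (A : (Fin (n + 1) → V) → R) (x : V → R) (v : V) :
    tensorApply (n + 1) A x v = ∑ f : Fin n → V, A (Fin.cons v f) * ∏ j, x (f j) := by
  rw [tensorApply, ← (Fin.consEquiv fun _ => V).sum_comp, Fintype.sum_prod_type]
  simp [Fin.consEquiv, prod_filter, Fin.prod_univ_succ]

end TensorAction

section Counting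

variable [DecidableEq V] {R : Type*} [CommRing R]

theorem image_univ_cons (n : ℕ) (v : V) (f : Fin n → V) :
    image (Fin.cons (α := fun _ => V) v f) univ = insert v (image f univ) := by
  ext u
  simp [Fin.exists_fin_succ, eq_comm]

theorem insert_image_eq_iff {n : ℕ} {e : Finset V} (he : #e = n + 1) (v : V) (f : Fin n → V) :
    insert v (image f univ) = e ↔ v ∈ e ∧ image f univ = e.erase v := by
  constructor
  · rintro rfl
    have hv : v ∉ image f univ := fun hv => by
      have := (card_image_le (s := univ) (f := f)).trans_eq (card_fin n)
      rw [insert_eq_of_mem hv] at he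
      omega
    exact ⟨mem_insert_self _ _, (erase_insert hv).symm⟩
  · rintro ⟨hv, hf⟩
    rw [hf, insert_erase hv]

variable [Fintype V]

theorem sum_prod_of_image_eq {n : ℕ} {t : Finset V} (ht : #t = n) (x : V → R) :
    ∑ f : Fin n → V with image f univ = t, ∏ j, x (f j) = n ! * ∏ u ∈ t, x u := by
  have himage : ({f : Fin n → V | image f univ = t} : Finset _) =
      univ.image (α := Fin n ≃ t) (β := Fin n → V) fun σ j => (σ j : V) := by
    ext f
    simp only [mem_filter, mem_univ, true_and, mem_image]
    constructor
    · intro hf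
      have hsurj :
          Function.Surjective fun j => (⟨f j, hf ▸ mem_image_of_mem f (mem_univ j)⟩ : t) :=
        fun u => by
          obtain ⟨j, -, hj⟩ := mem_image.mp (hf.symm ▸ u.2 : (u : V) ∈ image f univ)
          exact ⟨j, Subtype.ext hj⟩
      refine ⟨Equiv.ofBijective _ ((Fintype.bijective_iff_surjective_and_card _).mpr
        ⟨hsurj, by simp [ht]⟩), rfl⟩
    · rintro ⟨σ, -, rfl⟩
      ext u
      simp only [mem_image, mem_univ, true_and]
      exact ⟨fun ⟨j, hj⟩ => hj ▸ (σ j).2, fun hu => ⟨σ.symm ⟨u, hu⟩, by simp⟩⟩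
  rw [himage, sum_image fun σ _ τ _ h => Equiv.ext fun j => Subtype.ext (congrFun h j)]
  have hterm : ∀ σ : Fin n ≃ t, ∏ j, x (σ j) = ∏ u ∈ t, x u := fun σ => by
    rw [σ.prod_comp (fun u : t => x u), prod_coe_sort]
  simp only [hterm, sum_const, card_univ, nsmul_eq_mul,
    Fintype.card_equiv (t.equivFinOfCardEq ht).symm, Fintype.card_fin]

end Counting

section LaplacianAction

variable [Fintype V] [DecidableEq V]

theorem tensorApply_degT (n : ℕ) (E : Finset (Finset V)) (x : V → ℝ) (v : V) :
    tensorApply (n + 1) (degT (n + 1) E) x v = #{e ∈ E | v ∈ e} * x v ^ n := by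
  have hdeg : ∀ f : Fin n → V,
      degT (n + 1) E (Fin.cons v f) = if (fun _ => v) = f then (#{e ∈ E | v ∈ e} : ℝ) else 0 :=
    fun f => by simp [degT, Fin.forall_fin_succ, funext_iff, eq_comm]
  simp [tensorApply_succ, hdeg, ite_mul]

theorem tensorApply_adjT {R : Type*} [Field R] [CharZero R] (n : ℕ) (E : Finset (Finset V))
    (hE : ∀ e ∈ E, #e = n + 1) (γ : Finset V → R) (x : V → R) (v : V) :
    tensorApply (n + 1) (adjT R (n + 1) E γ) x v =
      ∑ e ∈ E with v ∈ e, γ e * ∏ u ∈ e.erase v, x u := by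
  have hadj : ∀ f : Fin n → V, adjT R (n + 1) E γ (Fin.cons v f) =
      ∑ e ∈ E, if v ∈ e ∧ image f univ = e.erase v then γ e / n ! else 0 := fun f => by
    rw [adjT, image_univ_cons, Nat.add_sub_cancel,
      ← sum_ite_eq E (insert v (image f univ)) fun e => γ e / n !]
    exact sum_congr rfl fun e he => by simp only [insert_image_eq_iff (hE e he)]
  have hfac : (n ! : R) ≠ 0 := Nat.cast_ne_zero.mpr n.factorial_ne_zero
  simp_rw [tensorApply_succ, hadj, sum_mul, ite_mul, zero_mul]
  rw [sum_comm, sum_filter]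
  refine sum_congr rfl fun e he => ?_
  by_cases hv : v ∈ e
  · have hcard : #(e.erase v) = n := by rw [card_erase_of_mem hv, hE e he]; rfl
    simp only [hv, true_and, if_true]
    rw [← sum_filter, ← mul_sum, sum_prod_of_image_eq hcard]
    field_simp
  · simp [hv]

theorem tensorApply_lapT (n : ℕ) (E : Finset (Finset V)) (hE : ∀ e ∈ E, #e = n + 1)
    (γ : Finset V → ℝ) (x : V → ℝ) (v : V) :
    tensorApply (n + 1) (lapT (n + 1) E γ) x v =
      #{e ∈ E | v ∈ e} * x v ^ n + ∑ e ∈ E with v ∈ e, γ e * ∏ u ∈ e.erase v, x u := by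
  have hlap : lapT (n + 1) E γ = degT (n + 1) E + adjT ℝ (n + 1) E γ := rfl
  rw [hlap, tensorApply_add, tensorApply_degT, tensorApply_adjT n E hE]

end LaplacianAction

theorem Finset.eq_of_le_of_pow_card_le_prod {ι R : Type*} [CommRing R] [LinearOrder R]
    [IsStrictOrderedRing R] {s : Finset ι} {f : ι → R} {m : R} (h0 : ∀ i ∈ s, 0 ≤ f i)
    (hle : ∀ i ∈ s, f i ≤ m) (hprod : m ^ #s ≤ ∏ i ∈ s, f i) : ∀ i ∈ s, f i = m := by
  intro i hi
  by_contra hne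
  have hlt : f i < m := (hle i hi).lt_of_ne hne
  have hm : 0 < m ^ #s := pow_pos ((h0 i hi).trans_lt hlt) _
  have hpos : ∀ j ∈ s, 0 < f j := fun j hj => (h0 j hj).lt_of_ne fun hj0 => by
    rw [prod_eq_zero hj hj0.symm] at hprod
    exact hm.not_ge hprod
  have := prod_lt_prod hpos hle ⟨i, hi, hlt⟩
  rw [prod_const] at this
  exact this.not_ge hprod

theorem HConnectedF.forall_of_edge_closed [DecidableEq V] {E : Finset (Finset V)}
    (hconn : HConnectedF E) {P : V → Prop} (hP : ∀ e ∈ E, ∀ u ∈ e, P u → ∀ w ∈ e, P w)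
    {v : V} (hv : P v) (u : V) : P u := by
  let Q : V ⊕ {e // e ∈ E} → Prop := Sum.elim P fun e => ∀ w ∈ e.1, P w
  have hQ : ∀ {a b}, (hIncGraph E).Walk a b → Q a → Q b := by
    intro a b p
    induction p with
    | nil => exact id
    | cons hadj _ ih =>
      refine fun ha => ih ?_
      rcases hadj with ⟨w, e, rfl, rfl, hw⟩ | ⟨w, e, rfl, rfl, hw⟩
      · exact hP e e.2 w hw ha
      · exact ha w hw
  obtain ⟨p⟩ := hconn.preconnected (Sum.inl v) (Sum.inl u)
  exact hQ p hv

theorem HConnectedF.nonempty [DecidableEq V] {E : Finset (Finset V)} (hconn : HConnectedF E)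
    (hE : ∀ e ∈ E, e.Nonempty) : Nonempty V := by
  obtain ⟨v | e⟩ := SimpleGraph.Connected.nonempty hconn
  · exact ⟨v⟩
  · exact (hE e.1 e.2).to_subtype.map Subtype.val

section SignVector

variable [DecidableEq V] {R : Type*} [CommRing R]

def signVec (S : Finset V) (u : V) : R := if u ∈ S then -1 else 1

theorem prod_signVec (S e : Finset V) : ∏ u ∈ e, (signVec S u : R) = (-1) ^ #(e ∩ S) := by
  simp [signVec, prod_ite_mem]

theorem signVec_mul_self (S : Finset V) (u : V) : (signVec S u : R) * signVec S u = 1 := by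
  unfold signVec; split_ifs <;> simp

theorem signVec_pow_of_odd (S : Finset V) (u : V) {n : ℕ} (hn : Odd n) :
    (signVec S u : R) ^ n = signVec S u := by
  unfold signVec; split_ifs <;> simp [hn.neg_one_pow]

theorem signVec_mul_abs [Fintype V] (x : V → ℝ) (u : V) :
    signVec {w | x w < 0} u * |x u| = x u := by
  unfold signVec; split_ifs with h <;> simp at h
  · rw [abs_of_neg h]; ring
  · rw [abs_of_nonneg h, one_mul]

end SignVector

section NullVectors

variable [Fintype V] [DecidableEq V] {n : ℕ} {E : Finset (Finset V)} {γ : Finset V → ℝ}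
  {x : V → ℝ}

theorem mul_prod_eq_neg_pow_of_isMax (hk : Even (n + 1)) (hE : ∀ e ∈ E, #e = n + 1)
    (hγ : ∀ e ∈ E, |γ e| ≤ 1) {v : V} (hxv : tensorApply (n + 1) (lapT (n + 1) E γ) x v = 0)
    (hmax : ∀ u, |x u| ≤ |x v|) {e : Finset V} (he : e ∈ E) (hve : v ∈ e) :
    γ e * ∏ u ∈ e, x u = -|x v| ^ (n + 1) := by
  set m := |x v|
  have hbound : ∀ e ∈ E, |γ e * ∏ u ∈ e, x u| ≤ m ^ (n + 1) := fun e he => calc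
    |γ e * ∏ u ∈ e, x u| = |γ e| * ∏ u ∈ e, |x u| := by rw [abs_mul, abs_prod]
    _ ≤ 1 * ∏ _u ∈ e, m := mul_le_mul (hγ e he)
        (prod_le_prod (fun _ _ => abs_nonneg _) fun u _ => hmax u)
        (prod_nonneg fun _ _ => abs_nonneg _) zero_le_one
    _ = m ^ (n + 1) := by rw [one_mul, prod_const, hE e he]
  have hsum : ∑ e ∈ E with v ∈ e, (m ^ (n + 1) + γ e * ∏ u ∈ e, x u) = 0 := calc
    _ = #{e ∈ E | v ∈ e} * x v ^ (n + 1) +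
          ∑ e ∈ E with v ∈ e, γ e * (x v * ∏ u ∈ e.erase v, x u) := by
      rw [sum_add_distrib, sum_const, nsmul_eq_mul, hk.pow_abs]
      congr 1
      exact sum_congr rfl fun e he => by rw [mul_prod_erase e x (mem_filter.mp he).2]
    _ = x v * tensorApply (n + 1) (lapT (n + 1) E γ) x v := by
      rw [tensorApply_lapT n E hE, mul_add, mul_sum, pow_succ]
      simp only [mul_left_comm (x v)]
      ring
    _ = 0 := by rw [hxv, mul_zero]
  have hterm := (sum_eq_zero_iff_of_nonneg fun e he => by
    linarith [neg_abs_le (γ e * ∏ u ∈ e, x u), hbound e (mem_filter.mp he).1]).mp hsum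
    e (mem_filter.mpr ⟨he, hve⟩)
  linarith

theorem abs_eq_of_isMax (hk : Even (n + 1)) (hE : ∀ e ∈ E, #e = n + 1)
    (hγ : ∀ e ∈ E, |γ e| ≤ 1) {v : V} (hxv : tensorApply (n + 1) (lapT (n + 1) E γ) x v = 0)
    (hmax : ∀ u, |x u| ≤ |x v|) {e : Finset V} (he : e ∈ E) (hve : v ∈ e) :
    ∀ u ∈ e, |x u| = |x v| := by
  have h := congrArg abs (mul_prod_eq_neg_pow_of_isMax hk hE hγ hxv hmax he hve)
  rw [abs_mul, abs_prod, abs_neg, abs_pow, abs_abs, ← hE e he] at h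
  refine eq_of_le_of_pow_card_le_prod (fun _ _ => abs_nonneg _) (fun u _ => hmax u) ?_
  rw [← h]
  exact mul_le_of_le_one_left (prod_nonneg fun _ _ => abs_nonneg _) (hγ e he)

theorem exists_parity_of_lapT_null (hk : Even (n + 1)) (hE : ∀ e ∈ E, #e = n + 1)
    (hconn : HConnectedF E) (hγ : ∀ e ∈ E, |γ e| ≤ 1) (hx : x ≠ 0)
    (hxE : ∀ v, tensorApply (n + 1) (lapT (n + 1) E γ) x v = 0) :
    ∃ S : Finset V, ∀ e ∈ E, γ e * (-1) ^ #(e ∩ S) = -1 := by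
  obtain ⟨w, hw⟩ := Function.ne_iff.mp hx
  have : Nonempty V := ⟨w⟩
  obtain ⟨v, hv⟩ := Finite.exists_max fun u => |x u|
  have hm : 0 < |x v| := (abs_pos.mpr hw).trans_le (hv w)
  have habs : ∀ u, |x u| = |x v| := hconn.forall_of_edge_closed
    (fun e he u hu (hxu : |x u| = |x v|) w hw =>
      (abs_eq_of_isMax hk hE hγ (hxE u) (hxu ▸ hv) he hu w hw).trans hxu) rfl
  refine ⟨({u | x u < 0} : Finset V), fun e he => ?_⟩
  obtain ⟨u, hu⟩ : e.Nonempty := card_pos.mp (by rw [hE e he]; omega)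
  have h := mul_prod_eq_neg_pow_of_isMax hk hE hγ (hxE u) (fun w => (habs u).symm ▸ hv w) he hu
  rw [← prod_congr rfl fun u _ => signVec_mul_abs x u, prod_mul_distrib, prod_signVec,
    prod_congr rfl fun u _ => habs u, prod_const, hE e he, habs u] at h
  have hpow : |x v| ^ (n + 1) ≠ 0 := (pow_pos hm _).ne'
  apply mul_right_cancel₀ hpow
  rw [mul_assoc, h, neg_one_mul]

theorem tensorApply_lapT_signVec (hn : Odd n) (hE : ∀ e ∈ E, #e = n + 1) {S : Finset V}
    (hS : ∀ e ∈ E, γ e * (-1) ^ #(e ∩ S) = -1) (v : V) :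
    tensorApply (n + 1) (lapT (n + 1) E γ) (signVec S) v = 0 := by
  have hterm : ∀ e ∈ E, v ∈ e → γ e * ∏ u ∈ e.erase v, signVec S u = -signVec S v := by
    intro e he hve
    rw [← one_mul (∏ u ∈ e.erase v, _), ← signVec_mul_self S v, mul_assoc,
      mul_prod_erase e _ hve, prod_signVec, mul_left_comm, hS e he, mul_neg_one]
  rw [tensorApply_lapT n E hE, signVec_pow_of_odd S v hn,
    sum_congr rfl fun e he => hterm e (mem_filter.mp he).1 (mem_filter.mp he).2]
  simp

end NullVectors

theorem abs_inducedSign [DecidableEq V] {E : Finset (Finset V)} {σ : Finset V → V → ℝ}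
    (k : ℕ) (hσ : IsIncidenceOrientation E σ) {e : Finset V} (he : e ∈ E) :
    |inducedSign k σ e| = 1 := by
  rw [inducedSign, abs_mul, abs_pow, abs_neg, abs_one, one_pow, one_mul, abs_prod]
  exact prod_eq_one fun v hv => by rcases hσ e he v hv with h | h <;> simp [h]

theorem parity_conditions_iff {g : ℝ} (hg : |g| = 1) (c : ℕ) :
    ((g = 1 → Odd c) ∧ (g = -1 → Even c)) ↔ g * (-1) ^ c = -1 := by
  rcases (abs_eq zero_le_one).mp hg with rfl | rfl <;>
    norm_num [neg_one_pow_eq_neg_one_iff_odd, neg_one_pow_eq_one_iff_even]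

/-- for a connected `k`-uniform oriented hypergraph `G^σ` with `k` even,
`0` is an H-eigenvalue of `L(ΓG^σ)` iff there is a bipartition `{V⁺, V⁻}` of the vertices
such that every positive edge meets `V⁻` in an odd number of vertices and every negative
edge meets `V⁻` in an even number of vertices. -/
theorem zero_H_eigenvalue_iff_bipartition [Fintype V] [DecidableEq V]
    (k : ℕ) [NeZero k] (hk : Even k) (E : Finset (Finset V)) (hE : ∀ e ∈ E, e.card = k)
    (hconn : HConnectedF E) (σ : Finset V → V → ℝ) (hσ : IsIncidenceOrientation E σ) :
    (∃ x : V → ℝ, IsTensorEigenpair ℝ k (lapT k E (inducedSign k σ)) 0 x) ↔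
      ∃ Vm : Finset V, ∀ e ∈ E,
        (inducedSign k σ e = 1 → Odd ((e ∩ Vm).card)) ∧
        (inducedSign k σ e = -1 → Even ((e ∩ Vm).card)) := by
  obtain ⟨n, rfl⟩ := Nat.exists_eq_add_one_of_ne_zero (NeZero.ne k)
  have hsign : ∀ e ∈ E, |inducedSign (n + 1) σ e| = 1 := fun e he => abs_inducedSign (n + 1) hσ he
  have hparity (S : Finset V) :=
    forall₂_congr fun e he => parity_conditions_iff (hsign e he) #(e ∩ S)
  simp only [isTensorEigenpair_iff, zero_mul, hparity]
  constructor
  · rintro ⟨x, hx, hxE⟩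
    exact exists_parity_of_lapT_null hk hE hconn (fun e he => (hsign e he).le) hx hxE
  · rintro ⟨S, hS⟩
    obtain ⟨v⟩ := hconn.nonempty fun e he => card_pos.mp (by rw [hE e he]; omega)
    have hn : Odd n := Nat.not_even_iff_odd.mp (Nat.even_add_one.mp hk)
    exact ⟨signVec S, fun h => left_ne_zero_of_mul_eq_one (signVec_mul_self S v) (congrFun h v),
      tensorApply_lapT_signVec hn hE hS⟩
end
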